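/- arXiv:1705.01349 — 4 statements merged into one kernel-verified Lean document; each statement's English description precedes it below -/
import Mathlib

section
/- Let 1 ≤ p < ∞, f ∈ L^p(ℝ^n), R > 0 and y ∈ ℝ^n nonzero. Then for every natural number N, ‖f·χ_{B_R(0)}‖_p ≤ N·sup_{|w|≤|y|} ‖T_w f − f‖_p + ‖f·χ_{B_R(−Ny)}‖_p. -/
open MeasureTheory Metric Set
open scoped ENNReal

/-!
Translating by `y` preserves the `Lᵖ` norm, and on the translated ball `f(· + y)` differs
from `f` by at most `‖T_{-y} f - f‖_p`; so moving the ball by `-y` costs at most one modulus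
of continuity term. Iterating `N` times moves the ball from `0` to `-N y`.
-/

section MeasurePreserving

variable {α E : Type*} [MeasurableSpace α] [NormedAddCommGroup E] {μ : Measure α} {p : ℝ≥0∞}
  {T : α → α} {f : α → E}

theorem eLpNorm_indicator_le_comp_sub_add_preimage (hp : 1 ≤ p)
    (hT : MeasurePreserving T μ μ) (hf : AEStronglyMeasurable f μ) {s : Set α}
    (hs : MeasurableSet s) :
    eLpNorm (s.indicator f) p μ ≤
      eLpNorm (f ∘ T - f) p μ + eLpNorm ((T ⁻¹' s).indicator f) p μ := by
  have hs' : MeasurableSet (T ⁻¹' s) := hT.measurable hs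
  have hfT : AEStronglyMeasurable (f ∘ T) μ := hf.comp_measurePreserving hT
  calc eLpNorm (s.indicator f) p μ
      = eLpNorm ((T ⁻¹' s).indicator (f ∘ T)) p μ := by
        rw [← eLpNorm_comp_measurePreserving (hf.indicator hs) hT]
        exact congrArg (eLpNorm · p μ) (funext fun _ => (indicator_comp_right T).symm)
    _ = eLpNorm ((T ⁻¹' s).indicator (f ∘ T - f) + (T ⁻¹' s).indicator f) p μ := by
        rw [← indicator_add', sub_add_cancel]
    _ ≤ eLpNorm ((T ⁻¹' s).indicator (f ∘ T - f)) p μ + eLpNorm ((T ⁻¹' s).indicator f) p μ :=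
        eLpNorm_add_le ((hfT.sub hf).indicator hs') (hf.indicator hs') hp
    _ ≤ eLpNorm (f ∘ T - f) p μ + eLpNorm ((T ⁻¹' s).indicator f) p μ := by
        gcongr
        exact eLpNorm_indicator_le _

theorem eLpNorm_indicator_le_nsmul_comp_sub_add_preimage_iterate (hp : 1 ≤ p)
    (hT : MeasurePreserving T μ μ) (hf : AEStronglyMeasurable f μ) {s : Set α}
    (hs : MeasurableSet s) (N : ℕ) :
    eLpNorm (s.indicator f) p μ ≤
      N * eLpNorm (f ∘ T - f) p μ + eLpNorm ((T^[N] ⁻¹' s).indicator f) p μ := by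
  induction N with
  | zero => simp
  | succ N ih =>
    have step := eLpNorm_indicator_le_comp_sub_add_preimage hp hT hf
      ((hT.iterate N).measurable hs)
    rw [← preimage_comp, ← Function.iterate_succ] at step
    calc eLpNorm (s.indicator f) p μ
        ≤ N * eLpNorm (f ∘ T - f) p μ + eLpNorm ((T^[N] ⁻¹' s).indicator f) p μ := ih
      _ ≤ N * eLpNorm (f ∘ T - f) p μ +
          (eLpNorm (f ∘ T - f) p μ + eLpNorm ((T^[N + 1] ⁻¹' s).indicator f) p μ) := by
          gcongr
      _ = (N + 1 : ℕ) * eLpNorm (f ∘ T - f) p μ +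
          eLpNorm ((T^[N + 1] ⁻¹' s).indicator f) p μ := by
          push_cast
          ring

end MeasurePreserving

theorem norm_ball_le_iterated_translate_general {n : ℕ} (p : ℝ≥0∞) (hp : 1 ≤ p)
    (f : EuclideanSpace ℝ (Fin n) → ℝ) (hf : MemLp f p volume)
    (R : ℝ) (y : EuclideanSpace ℝ (Fin n)) (N : ℕ) :
    eLpNorm ((ball (0 : EuclideanSpace ℝ (Fin n)) R).indicator f) p volume ≤
      (N : ℝ≥0∞) *
          (⨆ w : {w : EuclideanSpace ℝ (Fin n) // ‖w‖ ≤ ‖y‖},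
            eLpNorm (fun x => f (x - w.1) - f x) p volume) +
        eLpNorm ((ball (-(N • y)) R).indicator f) p volume := by
  have hshift : eLpNorm (f ∘ (· + y) - f) p volume ≤
      ⨆ w : {w : EuclideanSpace ℝ (Fin n) // ‖w‖ ≤ ‖y‖},
        eLpNorm (fun x => f (x - w.1) - f x) p volume := by
    refine le_trans (le_of_eq ?_) (le_iSup _ ⟨-y, (norm_neg y).le⟩)
    simp only [sub_neg_eq_add]
    rfl
  calc eLpNorm ((ball (0 : EuclideanSpace ℝ (Fin n)) R).indicator f) p volume
      ≤ N * eLpNorm (f ∘ (· + y) - f) p volume +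
          eLpNorm (((· + y)^[N] ⁻¹' ball 0 R).indicator f) p volume :=
        eLpNorm_indicator_le_nsmul_comp_sub_add_preimage_iterate hp
          (measurePreserving_add_right volume y) hf.1 measurableSet_ball N
    _ ≤ _ := by
        rw [add_right_iterate, preimage_add_right_ball, zero_sub]
        gcongr

/-- The iterated translation estimate:
`‖f·χ_{B_R(0)}‖_p ≤ N · sup_{|w| ≤ |y|} ‖T_w f − f‖_p + ‖f·χ_{B_R(−N y)}‖_p`. -/
theorem norm_ball_le_iterated_translate {n : ℕ} (p : ℝ≥0∞) (hp : 1 ≤ p) (hp' : p ≠ ⊤)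
    (f : EuclideanSpace ℝ (Fin n) → ℝ) (hf : MemLp f p volume)
    (R : ℝ) (hR : 0 < R) (y : EuclideanSpace ℝ (Fin n)) (hy : y ≠ 0) (N : ℕ) :
    eLpNorm ((ball (0 : EuclideanSpace ℝ (Fin n)) R).indicator f) p volume ≤
      (N : ℝ≥0∞) *
          (⨆ w : {w : EuclideanSpace ℝ (Fin n) // ‖w‖ ≤ ‖y‖},
            eLpNorm (fun x => f (x - w.1) - f x) p volume) +
        eLpNorm ((ball (-(N • y)) R).indicator f) p volume :=
  norm_ball_le_iterated_translate_general p hp f hf R y N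
end

section
/- Let p and q be conjugate exponents with 1 ≤ p < ∞, let φ ∈ L^q(ℝ^n) have compact support, and additionally assume φ is continuous if p = 1. Let K ⊂ ℝ^n be compact. Then the linear map Φ: L^p(K) → L^p(ℝ^n) given by Φf = φ * f (convolution) is a compact operator. -/
/-!
All the convolutions `φ ⋆ f`, for `f` in the unit ball of `L^p(K)`, vanish outside the compact set
`tsupport φ + K`. By Hölder's inequality they are bounded by `‖φ‖_q`, and
`|(φ ⋆ f) x - (φ ⋆ f) y| ≤ ‖φ - φ(· - (x - y))‖_q`, which tends to `0` with `x - y`: by continuity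
of translation in `L^q` when `q < ∞`, by uniform continuity of `φ` when `q = ∞`. So the family is
uniformly bounded and uniformly equicontinuous, and the Arzelà–Ascoli argument (a finite net of the
support, and a finite net of the values on it) yields finitely many convolutions that approximate
every other one uniformly, hence in `L^p`, on the common support of finite measure.
-/

open MeasureTheory Metric Set Filter Function Topology
open scoped ENNReal Convolution Pointwise

theorem eLpNorm_le_mul_measure_rpow_of_support_subset {α E : Type*} [MeasurableSpace α]
    {μ : Measure α} [NormedAddCommGroup E] {u : α → E} {C : Set α} {c : ℝ≥0∞}
    (hu : ∀ x ∈ C, ‖u x‖ₑ ≤ c) (hsupp : support u ⊆ C) (p : ℝ≥0∞) :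
    eLpNorm u p μ ≤ c * μ C ^ (1 / p.toReal) := by
  refine (eLpNorm_mono_enorm fun x => ?_).trans (eLpNorm_indicator_const_le c p)
  by_cases hx : x ∈ C
  · simpa [hx] using hu x hx
  · simp [hx, notMem_support.1 fun h => hx (hsupp h)]

section Equicontinuous

variable {α ι : Type*} [PseudoMetricSpace α] {F : ι → α → ℝ} {M : ℝ} {C : Set α}

theorem UniformEquicontinuous.exists_finset_forall_mem_dist_lt (hF : UniformEquicontinuous F)
    (hM : ∀ i x, |F i x| ≤ M) (hC : IsCompact C) {ε : ℝ} (hε : 0 < ε) :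
    ∃ T : Finset ι, ∀ i, ∃ j ∈ T, ∀ x ∈ C, dist (F i x) (F j x) < ε := by
  obtain ⟨δ, hδ, hFδ⟩ := Metric.uniformEquicontinuous_iff.1 hF (ε / 3) (by positivity)
  obtain ⟨N, -, hCN⟩ := hC.elim_nhds_subcover (fun y => ball y δ) fun y _ => ball_mem_nhds y hδ
  let V : ι → N → ℝ := fun i y => F i y
  have hV : TotallyBounded (range V) :=
    (isCompact_univ_pi fun _ => isCompact_Icc).totallyBounded.subset <| by
      rintro _ ⟨i, rfl⟩ y -
      exact abs_le.1 (hM i y)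
  obtain ⟨_, hTV, hTfin, hcover⟩ :=
    totallyBounded_iff_subset.1 hV _ (dist_mem_uniformity (by positivity : 0 < ε / 3))
  rw [← image_univ] at hTV
  obtain ⟨U, -, hUfin, rfl⟩ := exists_subset_image_finite_and.1 ⟨_, hTV, hTfin, rfl⟩
  refine ⟨hUfin.toFinset, fun i => ?_⟩
  obtain ⟨_, ⟨j, hj, rfl⟩, hij⟩ := mem_iUnion₂.1 (hcover (mem_range_self i))
  refine ⟨j, hUfin.mem_toFinset.2 hj, fun x hx => ?_⟩
  obtain ⟨y, hy, hxy⟩ := mem_iUnion₂.1 (hCN hx)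
  calc dist (F i x) (F j x)
      ≤ dist (F i x) (F i y) + dist (F i y) (F j y) + dist (F j y) (F j x) := dist_triangle4 ..
    _ < ε / 3 + ε / 3 + ε / 3 := by
      gcongr
      · exact hFδ x y hxy i
      · exact (dist_le_pi_dist (V i) (V j) ⟨y, hy⟩).trans_lt hij
      · exact hFδ y x (by rwa [dist_comm]) j
    _ = ε := by ring

theorem UniformEquicontinuous.exists_finset_eLpNorm_sub_lt [MeasurableSpace α] {μ : Measure α}
    [IsFiniteMeasureOnCompacts μ] (hF : UniformEquicontinuous F) (hM : ∀ i x, |F i x| ≤ M)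
    (hC : IsCompact C) (hsupp : ∀ i, support (F i) ⊆ C) (p : ℝ≥0∞) {ε : ℝ≥0∞} (hε : ε ≠ 0) :
    ∃ T : Finset ι, ∀ i, ∃ j ∈ T, eLpNorm (F i - F j) p μ < ε := by
  have hA : μ C ^ (1 / p.toReal) ≠ ∞ :=
    ENNReal.rpow_ne_top_of_nonneg (by positivity) hC.measure_lt_top.ne
  obtain ⟨η, hη, hηA⟩ := ENNReal.exists_nnreal_pos_mul_lt hA hε
  obtain ⟨T, hT⟩ := hF.exists_finset_forall_mem_dist_lt hM hC (NNReal.coe_pos.2 hη)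
  refine ⟨T, fun i => ?_⟩
  obtain ⟨j, hj, hij⟩ := hT i
  refine ⟨j, hj, (eLpNorm_le_mul_measure_rpow_of_support_subset (fun x hx => ?_)
    ((support_sub _ _).trans (union_subset (hsupp i) (hsupp j))) p).trans_lt hηA⟩
  rw [← edist_eq_enorm_sub]
  exact (edist_lt_coe.2 (hij x hx)).le

end Equicontinuous

theorem UniformContinuous.tendsto_eLpNorm_top_sub_comp_sub {G : Type*}
    [SeminormedAddCommGroup G] [MeasurableSpace G] {μ : Measure G} {φ : G → ℝ}
    (hφ : UniformContinuous φ) :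
    Tendsto (fun v => eLpNorm (fun t => φ t - φ (t - v)) ∞ μ) (𝓝 0) (𝓝 0) := by
  refine ENNReal.tendsto_nhds_zero.2 fun ε hε => ?_
  obtain ⟨δ, hδ, hφδ⟩ := EMetric.uniformContinuous_iff.1 hφ ε hε
  filter_upwards [eball_mem_nhds 0 hδ] with v hv
  rw [eLpNorm_exponent_top]
  refine eLpNormEssSup_le_of_ae_enorm_bound (.of_forall fun t => ?_)
  rw [← edist_eq_enorm_sub]
  refine (hφδ ?_).le
  rwa [edist_eq_enorm_sub, sub_sub_cancel, ← edist_zero_right]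

theorem MeasureTheory.MemLp.tendsto_eLpNorm_sub_comp_sub {G : Type*} [NormedAddCommGroup G]
    [MeasurableSpace G] [BorelSpace G] {μ : Measure G} [IsLocallyFiniteMeasure μ]
    [μ.InnerRegularCompactLTTop] [μ.IsAddLeftInvariant] {q : ℝ≥0∞} [Fact (1 ≤ q)] (hq : q ≠ ∞)
    {φ : G → ℝ} (hφ : MemLp φ q μ) :
    Tendsto (fun v => eLpNorm (fun t => φ t - φ (t - v)) q μ) (𝓝 0) (𝓝 0) := by
  have : Fact (q ≠ ∞) := ⟨hq⟩
  -- `DomAddAct.mk (-v)` acts on `L^q` by `φ ↦ φ (· - v)`, and this action is continuous for `q < ∞`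
  have hcont : Continuous fun v : G => DomAddAct.mk (-v) +ᵥ hφ.toLp φ :=
    (DomAddAct.mkHomeomorph.continuous.comp continuous_neg).vadd continuous_const
  have h := (tendsto_const_nhds (x := hφ.toLp φ)).edist (hcont.tendsto 0)
  simp only [neg_zero, DomAddAct.mk_zero, zero_vadd, edist_self] at h
  refine h.congr fun v => ?_
  rw [DomAddAct.mk_vadd_toLp, Lp.edist_toLp_toLp]
  simp only [vadd_eq_add, neg_add_eq_sub]
  rfl

theorem enorm_integral_mul_le_eLpNorm_mul_eLpNorm {α : Type*} [MeasurableSpace α]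
    {μ : Measure α} {p q : ℝ≥0∞} [q.HolderConjugate p] {φ g : α → ℝ}
    (hφ : AEStronglyMeasurable φ μ) (hg : AEStronglyMeasurable g μ) :
    ‖∫ t, φ t * g t ∂μ‖ₑ ≤ eLpNorm φ q μ * eLpNorm g p μ :=
  (enorm_integral_le_lintegral_enorm _).trans <| by
    rw [← eLpNorm_one_eq_lintegral_enorm]
    simpa using eLpNorm_le_eLpNorm_mul_eLpNorm'_of_norm (r := 1) hφ hg (· * ·) 1
      (.of_forall fun t => by simp [norm_mul])

section Convolution

variable {G : Type*} [NormedAddCommGroup G] [MeasurableSpace G] [BorelSpace G]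
  {μ : Measure G} [μ.IsAddLeftInvariant] [μ.IsNegInvariant]
  {p q : ℝ≥0∞} [q.HolderConjugate p] {φ f : G → ℝ}

local notation:67 φ " ⋆ " f => φ ⋆[ContinuousLinearMap.mul ℝ ℝ, μ] f

theorem enorm_convolution_le (hφ : AEStronglyMeasurable φ μ) (hf : AEStronglyMeasurable f μ)
    (x : G) : ‖(φ ⋆ f) x‖ₑ ≤ eLpNorm φ q μ * eLpNorm f p μ := by
  have hfx := Measure.measurePreserving_sub_left μ x
  rw [convolution_mul, ← eLpNorm_comp_measurePreserving hf hfx]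
  exact enorm_integral_mul_le_eLpNorm_mul_eLpNorm hφ (hf.comp_measurePreserving hfx)

theorem abs_convolution_le_of_eLpNorm_le_one (hφ : MemLp φ q μ) (hf : MemLp f p μ)
    (hf1 : eLpNorm f p μ ≤ 1) (x : G) : |(φ ⋆ f) x| ≤ (eLpNorm φ q μ).toReal := by
  rw [← Real.norm_eq_abs, ← toReal_enorm]
  exact ENNReal.toReal_mono hφ.eLpNorm_ne_top <|
    (enorm_convolution_le hφ.aestronglyMeasurable hf.aestronglyMeasurable x).trans
      (mul_le_of_le_one_right' hf1)

theorem convolution_apply_sub_convolution_apply (hφ : MemLp φ q μ) (hf : MemLp f p μ) (x y : G) :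
    (φ ⋆ f) x - (φ ⋆ f) y = ((fun t => φ t - φ (t - (x - y))) ⋆ f) x := by
  have hfx : MemLp (fun t => f (x - t)) p μ :=
    hf.comp_measurePreserving (Measure.measurePreserving_sub_left μ x)
  have hφv : MemLp (fun t => φ (t - (x - y))) q μ :=
    hφ.comp_measurePreserving (measurePreserving_sub_right μ (x - y))
  have hshift : (φ ⋆ f) y = ∫ t, φ (t - (x - y)) * f (x - t) ∂μ := by
    rw [convolution_mul, ← integral_sub_right_eq_self (fun t => φ t * f (y - t)) (x - y)]
    congr with t
    rw [show y - (t - (x - y)) = x - t by abel]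
  rw [hshift, convolution_mul, convolution_mul, ← integral_sub
    (memLp_one_iff_integrable.1 (hfx.mul' hφ)) (memLp_one_iff_integrable.1 (hfx.mul' hφv))]
  simp_rw [sub_mul]

theorem edist_convolution_le (hφ : MemLp φ q μ) (hf : MemLp f p μ) (x y : G) :
    edist ((φ ⋆ f) x) ((φ ⋆ f) y) ≤
      eLpNorm (fun t => φ t - φ (t - (x - y))) q μ * eLpNorm f p μ := by
  have hφv := hφ.aestronglyMeasurable.comp_measurePreserving
    (measurePreserving_sub_right μ (x - y))
  rw [edist_eq_enorm_sub, convolution_apply_sub_convolution_apply hφ hf]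
  exact enorm_convolution_le (hφ.aestronglyMeasurable.sub hφv) hf.aestronglyMeasurable x

theorem uniformEquicontinuous_convolution {ι : Type*} {f : ι → G → ℝ} (hφ : MemLp φ q μ)
    (htrans : Tendsto (fun v => eLpNorm (fun t => φ t - φ (t - v)) q μ) (𝓝 0) (𝓝 0))
    (hf : ∀ i, MemLp (f i) p μ) (hf1 : ∀ i, eLpNorm (f i) p μ ≤ 1) :
    UniformEquicontinuous fun i => φ ⋆ f i := by
  refine Metric.uniformEquicontinuous_iff.2 fun ε hε => ?_
  obtain ⟨δ, hδ, hsmall⟩ :=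
    Metric.eventually_nhds_iff.1 (htrans.eventually (gt_mem_nhds (ENNReal.ofReal_pos.2 hε)))
  refine ⟨δ, hδ, fun x y hxy i => edist_lt_ofReal.1 ?_⟩
  calc edist ((φ ⋆ f i) x) ((φ ⋆ f i) y)
      ≤ eLpNorm (fun t => φ t - φ (t - (x - y))) q μ * eLpNorm (f i) p μ :=
        edist_convolution_le hφ (hf i) x y
    _ ≤ eLpNorm (fun t => φ t - φ (t - (x - y))) q μ := mul_le_of_le_one_right' (hf1 i)
    _ < ENNReal.ofReal ε := hsmall (by rwa [dist_zero_right, ← dist_eq_norm])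

end Convolution

theorem convolution_compact_operator_general {n : ℕ} (p q : ℝ≥0∞)
    (hpq : 1 / p + 1 / q = 1)
    (φ : EuclideanSpace ℝ (Fin n) → ℝ) (hφ : MemLp φ q volume)
    (hφsupp : HasCompactSupport φ) (hφc : p = 1 → Continuous φ)
    (K : Set (EuclideanSpace ℝ (Fin n))) (hK : IsCompact K) :
    ∀ ε > (0 : ℝ), ∃ G : Finset (EuclideanSpace ℝ (Fin n) → ℝ),
      ∀ f : EuclideanSpace ℝ (Fin n) → ℝ, MemLp f p volume →
        (∀ x ∉ K, f x = 0) → eLpNorm f p volume ≤ 1 →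
          ∃ g ∈ G,
            eLpNorm ((fun x => ∫ t, φ t * f (x - t)) - g) p volume < ENNReal.ofReal ε := by
  intro ε hε
  have : q.HolderConjugate p :=
    ENNReal.holderConjugate_iff.2 (by simpa only [one_div, add_comm] using hpq)
  have htrans : Tendsto (fun v => eLpNorm (fun t => φ t - φ (t - v)) q volume) (𝓝 0) (𝓝 0) := by
    by_cases hq : q = ∞
    · subst hq
      have hp1 : p = 1 := (ENNReal.HolderConjugate.eq_top_iff_eq_one ∞ p).1 rfl
      exact (hφsupp.uniformContinuous_of_continuous (hφc hp1)).tendsto_eLpNorm_top_sub_comp_sub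
    · have : Fact (1 ≤ q) := ⟨ENNReal.HolderConjugate.one_le q p⟩
      exact hφ.tendsto_eLpNorm_sub_comp_sub hq
  let S := {f : EuclideanSpace ℝ (Fin n) → ℝ |
    MemLp f p volume ∧ (∀ x ∉ K, f x = 0) ∧ eLpNorm f p volume ≤ 1}
  let F : S → EuclideanSpace ℝ (Fin n) → ℝ := fun f => φ ⋆[ContinuousLinearMap.mul ℝ ℝ] f
  have hsupp (f : S) : support (F f) ⊆ tsupport φ + K :=
    (support_convolution_subset _).trans
      (add_subset_add (subset_tsupport φ) (support_subset_iff'.2 f.2.2.1))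
  obtain ⟨T, hT⟩ := (uniformEquicontinuous_convolution hφ htrans (fun f : S => f.2.1)
    fun f => f.2.2.2).exists_finset_eLpNorm_sub_lt (μ := volume)
    (fun f => abs_convolution_le_of_eLpNorm_le_one hφ f.2.1 f.2.2.2) (hφsupp.isCompact.add hK)
    hsupp p (ENNReal.ofReal_pos.2 hε).ne'
  classical
  refine ⟨T.image F, fun f hf hfK hf1 => ?_⟩
  obtain ⟨j, hj, hfj⟩ := hT ⟨f, hf, hfK, hf1⟩
  refine ⟨F j, Finset.mem_image_of_mem F hj, ?_⟩
  convert hfj using 3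
  exact funext fun x => convolution_mul.symm

/-- Convolution with a compactly supported `L^q` kernel (continuous if `p = 1`)
is a compact operator from `L^p(K)` to `L^p(ℝⁿ)`: the image of the unit ball of
`L^p(K)` is totally bounded in the `L^p` metric. -/
theorem convolution_compact_operator {n : ℕ} (p q : ℝ≥0∞) (hp : 1 ≤ p) (hp' : p ≠ ⊤)
    (hpq : 1 / p + 1 / q = 1)
    (φ : EuclideanSpace ℝ (Fin n) → ℝ) (hφ : MemLp φ q volume)
    (hφsupp : HasCompactSupport φ) (hφc : p = 1 → Continuous φ)
    (K : Set (EuclideanSpace ℝ (Fin n))) (hK : IsCompact K) :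
    ∀ ε > (0 : ℝ), ∃ G : Finset (EuclideanSpace ℝ (Fin n) → ℝ),
      ∀ f : EuclideanSpace ℝ (Fin n) → ℝ, MemLp f p volume →
        (∀ x ∉ K, f x = 0) → eLpNorm f p volume ≤ 1 →
          ∃ g ∈ G,
            eLpNorm ((fun x => ∫ t, φ t * f (x - t)) - g) p volume < ENNReal.ofReal ε :=
  convolution_compact_operator_general p q hpq φ hφ hφsupp hφc K hK
end

section
/- (Mazur) Let G be a bounded subset of a Banach space X and let (U_k) be a sequence of compact operators on X converging to the identity in the strong operator topology (‖U_k x − x‖ → 0 for every x ∈ X). Then G is totally bounded if and only if ‖U_k x − x‖ → 0 uniformly for x ∈ G. -/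
/-!
If `‖U k x - x‖ < ε` on `G`, then `G` lies in the `ε`-neighbourhood of `U k '' G`, which is
relatively compact, so `G` is totally bounded. Conversely, by Banach–Steinhaus the strongly
convergent sequence `U k` is uniformly equicontinuous, and an equicontinuous family converging
pointwise converges uniformly on a totally bounded set: it does so on a finite net, and
equicontinuity transfers this to every point close to the net.
-/

open Filter Set Topology

section UniformSpace

variable {ι α β : Type*} [UniformSpace β] {F : ι → α → β} {f : α → β} {p : Filter ι}
  {s : Set α}

theorem TendstoUniformlyOn.totallyBounded_image [p.NeBot] (h : TendstoUniformlyOn F f p s)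
    (hF : ∀ i, TotallyBounded (F i '' s)) : TotallyBounded (f '' s) := by
  intro d hd
  obtain ⟨e, he, hed⟩ := comp_mem_uniformity_sets hd
  obtain ⟨i, hi⟩ := (h e he).exists
  obtain ⟨t, ht, hcover⟩ := hF i e he
  refine ⟨t, ht, ?_⟩
  rintro _ ⟨x, hx, rfl⟩
  obtain ⟨y, hy, hxy⟩ := mem_iUnion₂.mp (hcover (mem_image_of_mem _ hx))
  exact mem_iUnion₂.mpr ⟨y, hy, hed ⟨F i x, hi x hx, hxy⟩⟩

theorem UniformEquicontinuous.tendstoUniformlyOn_of_tendsto [UniformSpace α]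
    (hF : UniformEquicontinuous F) (hf : UniformContinuous f) (hs : TotallyBounded s)
    (h : ∀ x ∈ s, Tendsto (F · x) p (𝓝 (f x))) : TendstoUniformlyOn F f p s := by
  intro d hd
  obtain ⟨e, he, he_symm, hed⟩ := comp_comp_symm_mem_uniformity_sets hd
  obtain ⟨t, hts, ht, hcover⟩ := totallyBounded_iff_subset.mp hs _ (inter_mem (hf he) (hF e he))
  have hnet : ∀ᶠ i in p, ∀ y ∈ t, (f y, F i y) ∈ e :=
    ht.eventually_all.2 fun y hy => h y (hts hy) (mem_nhds_left (f y) he)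
  filter_upwards [hnet] with i hi x hx
  obtain ⟨y, hy, hxy_f, hxy_F⟩ := mem_iUnion₂.mp (hcover hx)
  exact hed ⟨F i y, ⟨f y, hxy_f, hi y hy⟩, SetRel.symm e (hxy_F i)⟩

end UniformSpace

theorem tendstoUniformlyOn_atTop_iff_norm {α E : Type*} [SeminormedAddCommGroup E]
    {F : ℕ → α → E} {f : α → E} {s : Set α} :
    TendstoUniformlyOn F f atTop s ↔
      ∀ ε > (0 : ℝ), ∃ K, ∀ k ≥ K, ∀ x ∈ s, ‖F k x - f x‖ < ε := by
  simp only [Metric.tendstoUniformlyOn_iff, eventually_atTop, dist_eq_norm']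

/-- Mazur's theorem: for a bounded subset `G` of a Banach space and a sequence of
compact operators `U_k` converging strongly to the identity, `G` is totally
bounded iff `‖U_k x − x‖ → 0` uniformly on `G`. -/
theorem mazur_totallyBounded_iff {X : Type*} [NormedAddCommGroup X] [NormedSpace ℝ X]
    [CompleteSpace X] (G : Set X) (hG : Bornology.IsBounded G)
    (U : ℕ → X →L[ℝ] X) (hU : ∀ k, IsCompactOperator (U k))
    (hconv : ∀ x : X, Tendsto (fun k => ‖U k x - x‖) atTop (nhds 0)) :
    TotallyBounded G ↔
      ∀ ε > (0 : ℝ), ∃ K : ℕ, ∀ k ≥ K, ∀ x ∈ G, ‖U k x - x‖ < ε := by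
  have hlim : ∀ x, Tendsto (U · x) atTop (𝓝 x) := fun x =>
    tendsto_iff_norm_sub_tendsto_zero.2 (hconv x)
  have hequi : UniformEquicontinuous fun k => ⇑(U k) :=
    PolynormableSpace.banach_steinhaus fun x => (hlim x).isVonNBounded_range ℝ
  constructor
  · intro hTB
    exact tendstoUniformlyOn_atTop_iff_norm.1 <|
      hequi.tendstoUniformlyOn_of_tendsto uniformContinuous_id hTB fun x _ => hlim x
  · intro h
    have hTB_image : ∀ k, TotallyBounded (U k '' G) := fun k =>
      ((hU k).isCompact_closure_image_of_bounded hG).totallyBounded.subset subset_closure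
    simpa only [image_id] using
      (tendstoUniformlyOn_atTop_iff_norm (f := id).2 h).totallyBounded_image hTB_image
end

section
/- Let 1 ≤ p < ∞ and F ⊆ L^p(ℝ^n) be totally bounded. Then for every ε > 0 there is ρ > 0 such that ‖T_y f − f‖_p < ε for all f ∈ F and all y with |y| < ρ, and there exists R > 0 such that ∫_{|x|>R}|f|^p dx < ε^p for all f ∈ F. -/
/-!
Each condition holds for a single `L^p` function: translation acts continuously on `L^p`, and
the tails `∫_{|x|>R} |g|^p` are the values of the finite measure `|g|^p dx` on sets decreasing
to `∅`. Both quantities at `f` exceed those at `g` by at most a multiple of `‖f - g‖_p`, so they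
pass uniformly to `F` through a finite `ε/3`-net.
-/

open MeasureTheory Filter
open scoped ENNReal Topology

theorem Filter.eventually_forall_lt_of_finite_net {ι α : Type*} {l : Filter ι}
    {Φ : ι → α → ℝ≥0∞} {F : Set α} {t : Finset α} {η δ : ℝ≥0∞} (hδ : δ ≠ ∞)
    (ht : ∀ g ∈ t, ∀ᶠ i in l, Φ i g < η) (hnet : ∀ f ∈ F, ∃ g ∈ t, ∀ i, Φ i f ≤ Φ i g + δ) :
    ∀ᶠ i in l, ∀ f ∈ F, Φ i f < η + δ := by
  filter_upwards [(eventually_all_finset t).2 ht] with i hi f hf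
  obtain ⟨g, hg, hfg⟩ := hnet f hf
  exact (hfg i).trans_lt (ENNReal.add_lt_add_right hδ (hi g hg))

namespace MeasureTheory

theorem MemLp.integral_abs_rpow_lt_rpow_iff {α : Type*} [MeasurableSpace α] {μ : Measure α}
    {p : ℝ} (hp : 0 < p) {h : α → ℝ} (hh : MemLp h (ENNReal.ofReal p) μ) {ε : ℝ} (hε : 0 < ε) :
    ∫ x, |h x| ^ p ∂μ < ε ^ p ↔ eLpNorm h (ENNReal.ofReal p) μ < ENNReal.ofReal ε := by
  have hI : 0 ≤ ∫ x, |h x| ^ p ∂μ := integral_nonneg fun x => by positivity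
  rw [hh.eLpNorm_eq_integral_rpow_norm (by simpa using hp) ENNReal.ofReal_ne_top,
    ENNReal.ofReal_lt_ofReal_iff hε, ENNReal.toReal_ofReal hp.le]
  simp only [Real.norm_eq_abs]
  rw [← Real.rpow_lt_rpow_iff (Real.rpow_nonneg hI _) hε.le hp, Real.rpow_inv_rpow hI hp.ne']

section Decay

variable {α E : Type*} [NormedAddCommGroup E] [MeasurableSpace α] {μ : Measure α} {q : ℝ≥0∞}

theorem MemLp.tendsto_eLpNorm_restrict_of_antitone {ι : Type*} [Preorder ι] [Nonempty ι]
    [IsCountablyGenerated (atTop : Filter ι)] {s : ι → Set α} (hs : ∀ i, MeasurableSet (s i))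
    (hanti : Antitone s) (hempty : ⋂ i, s i = ∅) (hq0 : q ≠ 0) (hq : q ≠ ∞) {g : α → E}
    (hg : MemLp g q μ) :
    Tendsto (fun i => eLpNorm g q (μ.restrict (s i))) atTop (𝓝 0) := by
  set ν := μ.withDensity fun x => ‖g x‖ₑ ^ q.toReal
  have : IsFiniteMeasure ν := isFiniteMeasure_withDensity
    ((eLpNorm_lt_top_iff_lintegral_rpow_enorm_lt_top hq0 hq).1 hg.2).ne
  have hν : Tendsto (ν ∘ s) atTop (𝓝 0) := by
    simpa [hempty] using tendsto_measure_iInter_atTop (fun i => (hs i).nullMeasurableSet) hanti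
      ⟨Classical.arbitrary ι, measure_ne_top ν _⟩
  have hpos : 0 < 1 / q.toReal := by simp [ENNReal.toReal_pos hq0 hq]
  have := ((ENNReal.continuous_rpow_const (y := 1 / q.toReal)).tendsto 0).comp hν
  rw [ENNReal.zero_rpow_of_pos hpos] at this
  refine this.congr fun i => ?_
  simp [ν, eLpNorm_eq_lintegral_rpow_enorm_toReal hq0 hq, withDensity_apply _ (hs i)]

theorem eLpNorm_restrict_le_add (hq1 : 1 ≤ q) {f g : α → E} (hf : AEStronglyMeasurable f μ)
    (hg : AEStronglyMeasurable g μ) (s : Set α) :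
    eLpNorm f q (μ.restrict s) ≤ eLpNorm g q (μ.restrict s) + eLpNorm (f - g) q μ :=
  calc eLpNorm f q (μ.restrict s) = eLpNorm (g + (f - g)) q (μ.restrict s) := by
        rw [add_sub_cancel]
    _ ≤ eLpNorm g q (μ.restrict s) + eLpNorm (f - g) q (μ.restrict s) :=
        eLpNorm_add_le hg.restrict (hf.sub hg).restrict hq1
    _ ≤ eLpNorm g q (μ.restrict s) + eLpNorm (f - g) q μ :=
        add_le_add_right (eLpNorm_mono_measure _ Measure.restrict_le_self) _

theorem eventually_forall_eLpNorm_restrict_norm_gt_lt [SeminormedAddGroup α]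
    [OpensMeasurableSpace α] (hq1 : 1 ≤ q) (hq : q ≠ ∞) {F : Set (α → E)} {t : Finset (α → E)}
    {δ : ℝ≥0∞} (hδ0 : 0 < δ) (hδ : δ ≠ ∞) (hF : ∀ f ∈ F, AEStronglyMeasurable f μ)
    (ht : ∀ g ∈ t, MemLp g q μ) (hnet : ∀ f ∈ F, ∃ g ∈ t, eLpNorm (f - g) q μ < δ) :
    ∀ᶠ R : ℝ in atTop, ∀ f ∈ F, eLpNorm f q (μ.restrict {x | R < ‖x‖}) < 2 * δ := by
  have hq0 : q ≠ 0 := (zero_lt_one.trans_le hq1).ne'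
  have hempty : ⋂ R : ℝ, {x : α | R < ‖x‖} = ∅ :=
    Set.iInter_eq_empty_iff.2 fun x => ⟨‖x‖, by simp⟩
  have hanti : Antitone fun R : ℝ => {x : α | R < ‖x‖} := fun R R' hR x hx => hR.trans_lt hx
  have hmeas (R : ℝ) : MeasurableSet {x : α | R < ‖x‖} :=
    (isOpen_lt continuous_const continuous_norm).measurableSet
  rw [two_mul]
  refine eventually_forall_lt_of_finite_net hδ (fun g hg =>
    ((ht g hg).tendsto_eLpNorm_restrict_of_antitone hmeas hanti hempty hq0 hq).eventually
      (gt_mem_nhds hδ0)) fun f hf => ?_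
  obtain ⟨g, hg, hfg⟩ := hnet f hf
  exact ⟨g, hg, fun R => (eLpNorm_restrict_le_add hq1 (hF f hf) (ht g hg).1 _).trans
    (add_le_add_right hfg.le _)⟩

end Decay

section Translation

variable {G E : Type*} [NormedAddCommGroup E] [AddGroup G] [MeasurableSpace G] {μ : Measure G}
  [μ.IsAddRightInvariant] {q : ℝ≥0∞}

theorem eLpNorm_comp_sub_sub_le [MeasurableAdd G] (hq1 : 1 ≤ q) {f g : G → E}
    (hf : AEStronglyMeasurable f μ) (hg : AEStronglyMeasurable g μ) (y : G) :
    eLpNorm (fun x => f (x - y) - f x) q μ ≤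
      eLpNorm (fun x => g (x - y) - g x) q μ + 2 * eLpNorm (f - g) q μ := by
  have hτ := measurePreserving_sub_right μ y
  have hfg : AEStronglyMeasurable (f - g) μ := hf.sub hg
  have hτg : AEStronglyMeasurable (fun x => g (x - y)) μ := hg.comp_measurePreserving hτ
  have hτfg : AEStronglyMeasurable (fun x => (f - g) (x - y)) μ := hfg.comp_measurePreserving hτ
  have hiso : eLpNorm (fun x => (f - g) (x - y)) q μ = eLpNorm (f - g) q μ :=
    eLpNorm_comp_measurePreserving hfg hτ
  calc eLpNorm (fun x => f (x - y) - f x) q μ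
      = eLpNorm ((fun x => g (x - y) - g x) + ((fun x => (f - g) (x - y)) - (f - g))) q μ := by
        congr 1; ext x; simp only [Pi.add_apply, Pi.sub_apply]; abel
    _ ≤ eLpNorm (fun x => g (x - y) - g x) q μ +
          (eLpNorm (fun x => (f - g) (x - y)) q μ + eLpNorm (f - g) q μ) :=
        (eLpNorm_add_le (hτg.sub hg) (hτfg.sub hfg) hq1).trans
          (add_le_add_right (eLpNorm_sub_le hτfg hfg hq1) _)
    _ = _ := by rw [hiso, two_mul]

variable [TopologicalSpace G] [IsTopologicalAddGroup G] [BorelSpace G]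
  [IsLocallyFiniteMeasure μ] [μ.InnerRegularCompactLTTop]

theorem MemLp.tendsto_eLpNorm_comp_sub_sub (hq1 : 1 ≤ q) (hq : q ≠ ∞) {g : G → E}
    (hg : MemLp g q μ) :
    Tendsto (fun y => eLpNorm (fun x => g (x - y) - g x) q μ) (𝓝 0) (𝓝 0) := by
  have : Fact (1 ≤ q) := ⟨hq1⟩
  let τ : C(G, C(G, G)) := ContinuousMap.curry ⟨fun p => p.2 - p.1, by fun_prop⟩
  have hτ : ∀ y, MeasurePreserving (τ y) μ μ := fun y => measurePreserving_sub_right μ y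
  let C : G → Lp E q μ := fun y => Lp.compMeasurePreserving (τ y) (hτ y) (hg.toLp g)
  have hC : Continuous C := continuous_const.compMeasurePreservingLp τ.continuous hτ hq
  have hCg : ∀ y, C y =ᵐ[μ] fun x => g (x - y) := fun y =>
    (Lp.coeFn_compMeasurePreserving _ (hτ y)).trans
      ((hτ y).quasiMeasurePreserving.ae_eq_comp hg.coeFn_toLp)
  have hdist : ∀ y, eLpNorm (fun x => g (x - y) - g x) q μ = edist (C y) (C 0) := fun y => by
    rw [Lp.edist_def]
    refine eLpNorm_congr_ae ?_
    filter_upwards [hCg y, hCg 0] with x hy h0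
    simp [hy, h0]
  simpa only [hdist, edist_self] using (hC.tendsto 0).edist (tendsto_const_nhds (x := C 0))

theorem eventually_forall_eLpNorm_comp_sub_sub_lt (hq1 : 1 ≤ q) (hq : q ≠ ∞)
    {F : Set (G → E)} {t : Finset (G → E)} {δ : ℝ≥0∞} (hδ0 : 0 < δ) (hδ : δ ≠ ∞)
    (hF : ∀ f ∈ F, AEStronglyMeasurable f μ) (ht : ∀ g ∈ t, MemLp g q μ)
    (hnet : ∀ f ∈ F, ∃ g ∈ t, eLpNorm (f - g) q μ < δ) :
    ∀ᶠ y in 𝓝 0, ∀ f ∈ F, eLpNorm (fun x => f (x - y) - f x) q μ < 3 * δ := by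
  rw [show 3 * δ = δ + 2 * δ by ring]
  refine eventually_forall_lt_of_finite_net (ENNReal.mul_ne_top ENNReal.ofNat_ne_top hδ)
    (fun g hg => ((ht g hg).tendsto_eLpNorm_comp_sub_sub hq1 hq).eventually (gt_mem_nhds hδ0))
    fun f hf => ?_
  obtain ⟨g, hg, hfg⟩ := hnet f hf
  exact ⟨g, hg, fun y => (eLpNorm_comp_sub_sub_le hq1 (hF f hf) (ht g hg).1 y).trans (by gcongr)⟩

end Translation

end MeasureTheory

open MeasureTheory Metric Set

/-- Necessity in the Kolmogorov–Riesz theorem: a totally bounded family in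
`L^p(ℝⁿ)` (expressed via finite `ε`-nets for the `L^p` metric) is uniformly
`L^p`-equicontinuous under translation and has uniform decay at infinity. -/
theorem kolmogorov_riesz_necessity {n : ℕ} (p : ℝ) (hp : 1 ≤ p)
    (F : Set (EuclideanSpace ℝ (Fin n) → ℝ))
    (hF : ∀ f ∈ F, MemLp f (ENNReal.ofReal p) volume)
    (htb : ∀ ε > (0 : ℝ), ∃ G : Finset (EuclideanSpace ℝ (Fin n) → ℝ),
      (∀ g ∈ G, MemLp g (ENNReal.ofReal p) volume) ∧ ∀ f ∈ F,
        ∃ g ∈ G, ∫ x, |f x - g x| ^ p < ε ^ p) :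
    ∀ ε > (0 : ℝ),
      (∃ ρ > (0 : ℝ), ∀ f ∈ F, ∀ y : EuclideanSpace ℝ (Fin n), ‖y‖ < ρ →
        ∫ x, |f (x - y) - f x| ^ p < ε ^ p) ∧
      (∃ R > (0 : ℝ), ∀ f ∈ F,
        ∫ x in {x : EuclideanSpace ℝ (Fin n) | R < ‖x‖}, |f x| ^ p < ε ^ p) := by
  intro ε hε
  have hp0 : 0 < p := by linarith
  have hq1 : 1 ≤ ENNReal.ofReal p := by simpa using ENNReal.ofReal_le_ofReal hp
  obtain ⟨t, ht, hnet⟩ := htb (ε / 3) (by positivity)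
  have hnet' : ∀ f ∈ F, ∃ g ∈ t, eLpNorm (f - g) (ENNReal.ofReal p) volume < .ofReal (ε / 3) :=
    fun f hf => (hnet f hf).imp fun g ⟨hg, hfg⟩ =>
      ⟨hg, (((hF f hf).sub (ht g hg)).integral_abs_rpow_lt_rpow_iff hp0 (by positivity)).1 hfg⟩
  have hδ : 0 < ENNReal.ofReal (ε / 3) := ENNReal.ofReal_pos.2 (by positivity)
  have hthree : 3 * ENNReal.ofReal (ε / 3) = ENNReal.ofReal ε := by
    rw [← ENNReal.ofReal_ofNat 3, ← ENNReal.ofReal_mul (by norm_num)]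
    ring_nf
  refine ⟨?_, ?_⟩
  · obtain ⟨ρ, hρ, hball⟩ := Metric.eventually_nhds_iff.1 <|
      eventually_forall_eLpNorm_comp_sub_sub_lt hq1 ENNReal.ofReal_ne_top hδ ENNReal.ofReal_ne_top
        (fun f hf => (hF f hf).1) ht hnet'
    refine ⟨ρ, hρ, fun f hf y hy => ?_⟩
    have hτ : MemLp (fun x => f (x - y) - f x) (ENNReal.ofReal p) volume :=
      ((hF f hf).comp_measurePreserving (measurePreserving_sub_right volume y)).sub (hF f hf)
    rw [hτ.integral_abs_rpow_lt_rpow_iff hp0 hε, ← hthree]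
    exact hball (by simpa using hy) f hf
  · obtain ⟨R, hR, hR0⟩ := (eventually_forall_eLpNorm_restrict_norm_gt_lt hq1
      ENNReal.ofReal_ne_top hδ ENNReal.ofReal_ne_top (fun f hf => (hF f hf).1) ht hnet' |>.and
        (eventually_gt_atTop 0)).exists
    refine ⟨R, hR0, fun f hf => ?_⟩
    rw [((hF f hf).restrict _).integral_abs_rpow_lt_rpow_iff hp0 hε, ← hthree]
    exact (hR f hf).trans_le (by gcongr; norm_num)
end
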